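/- Let Q be a random variable on a finite set, f^T a target classifier (possibly stochastic) and f^E a stochastic extracted classifier with conditional pmf p_E(·|q), jointly defined with Q. Then the mutual information between the joint distributions satisfies I((f^T(Q),Q) ; (f^E(Q),Q)) ≥ H(f^E(Q)) - l(f^E(Q), f^T(Q)), where l(f^E(Q), f^T(Q)) = -∑_a p_{f^E(Q)}(a) log p_{f^T(Q)}(a) is the cross entropy between the marginal label distributions (assuming p_{f^T(Q)}(a) > 0 whenever p_{f^E(Q)}(a) > 0). -/
import Mathlib

open Finset Real

noncomputable def ent {α : Type*} [Fintype α] (p : α → ℝ) : ℝ :=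
  -∑ a, p a * Real.log (p a)

noncomputable def kl {α : Type*} [Fintype α] (p q : α → ℝ) : ℝ :=
  ∑ a, p a * Real.log (p a / q a)

noncomputable def cross {α : Type*} [Fintype α] (p q : α → ℝ) : ℝ :=
  -∑ a, p a * Real.log (q a)

noncomputable def margFst {α β : Type*} [Fintype α] [Fintype β] (p : α × β → ℝ) : α → ℝ :=
  fun a => ∑ b, p (a, b)

noncomputable def margSnd {α β : Type*} [Fintype α] [Fintype β] (p : α × β → ℝ) : β → ℝ :=
  fun b => ∑ a, p (a, b)

/-- Conditional entropy H(X|Y) for a joint pmf on X × Y (X is the first coordinate). -/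
noncomputable def condEntFst {α β : Type*} [Fintype α] [Fintype β] (p : α × β → ℝ) : ℝ :=
  -∑ x : α × β, p x * Real.log (p x / margSnd p x.2)

/-- Conditional entropy H(Y|X) for a joint pmf on X × Y (Y is the second coordinate). -/
noncomputable def condEntSnd {α β : Type*} [Fintype α] [Fintype β] (p : α × β → ℝ) : ℝ :=
  -∑ x : α × β, p x * Real.log (p x / margFst p x.1)

/-- Mutual information I(X;Y) as the KL divergence between the joint and the product of marginals. -/
noncomputable def miKL {α β : Type*} [Fintype α] [Fintype β] (p : α × β → ℝ) : ℝ :=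
  ∑ x : α × β, p x * Real.log (p x / (margFst p x.1 * margSnd p x.2))

lemma gibbs {γ : Type*} [Fintype γ] (p q : γ → ℝ) (hp : ∀ x, 0 ≤ p x)
    (hq : ∀ x, 0 ≤ q x) (hac : ∀ x, 0 < p x → 0 < q x) (hsum : ∑ x, q x ≤ ∑ x, p x) :
    0 ≤ ∑ x, p x * Real.log (p x / q x) := by
  have key : ∀ x, p x - q x ≤ p x * Real.log (p x / q x) := by
    intro x
    rcases eq_or_lt_of_le (hp x) with h | h
    · rw [← h]; simp; linarith [hq x]
    · have hqx := hac x h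
      have hlog : Real.log (q x / p x) ≤ q x / p x - 1 :=
        Real.log_le_sub_one_of_pos (div_pos hqx h)
      have h2 : 1 - q x / p x ≤ Real.log (p x / q x) := by
        rw [show p x / q x = (q x / p x)⁻¹ by field_simp, Real.log_inv]; linarith
      have := mul_le_mul_of_nonneg_left h2 (le_of_lt h)
      calc p x - q x = p x * (1 - q x / p x) := by field_simp
        _ ≤ p x * Real.log (p x / q x) := this
  calc (0:ℝ) ≤ ∑ x, (p x - q x) := by rw [Finset.sum_sub_distrib]; linarith
    _ ≤ _ := Finset.sum_le_sum fun x _ => key x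

lemma triple {α β : Type*} [Fintype α] [Fintype β] (f : α → α → β → ℝ) :
    ∑ x : α × α × β, f x.1 x.2.1 x.2.2 = ∑ a, ∑ b, ∑ q, f a b q := by
  simp [Fintype.sum_prod_type]

lemma pairsum {α β : Type*} [Fintype α] [Fintype β] (f : α → β → ℝ) :
    ∑ y : α × β, f y.1 y.2 = ∑ a, ∑ q, f a q := by
  simp [Fintype.sum_prod_type]

theorem mi_joints_ge_entropy_sub_cross {α β : Type*} [Fintype α] [Fintype β]
    (p : α × α × β → ℝ) (hp0 : ∀ x, 0 ≤ p x) (hp1 : ∑ x, p x = 1)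
    (habs : ∀ a, 0 < (∑ y : α × β, p (y.1, a, y.2)) → 0 < (∑ y : α × β, p (a, y))) :
    ent (fun aq : α × β => ∑ b, p (aq.1, b, aq.2)) +
        ent (fun bq : α × β => ∑ a, p (a, bq.1, bq.2)) - ent p
      ≥ ent (fun b => ∑ y : α × β, p (y.1, b, y.2)) -
          cross (fun b => ∑ y : α × β, p (y.1, b, y.2)) (fun a => ∑ y : α × β, p (a, y)) := by
  set pE : α → ℝ := fun b => ∑ y : α × β, p (y.1, b, y.2) with hpE
  set pT : α → ℝ := fun a => ∑ y : α × β, p (a, y) with hpT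
  set PT : α × β → ℝ := fun aq => ∑ b, p (aq.1, b, aq.2) with hPT
  set PE : α × β → ℝ := fun bq => ∑ a, p (a, bq.1, bq.2) with hPE
  have hp1' : ∑ a, ∑ b, ∑ q, p (a, b, q) = 1 := by
    rw [← triple]; simpa using hp1
  have hpTsum : ∑ a, pT a = 1 := by
    rw [hpT, ← hp1, Fintype.sum_prod_type]
  have hpEsum : ∑ b, pE b = 1 := by
    rw [hpE]; simp only [Fintype.sum_prod_type]
    rw [Finset.sum_comm]; exact hp1'
  have hpE0 : ∀ b, 0 ≤ pE b := fun b => Finset.sum_nonneg fun y _ => hp0 _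
  have hpT0 : ∀ a, 0 ≤ pT a := fun a => Finset.sum_nonneg fun y _ => hp0 _
  have hPT0 : ∀ y, 0 ≤ PT y := fun y => Finset.sum_nonneg fun b _ => hp0 _
  have hPE0 : ∀ y, 0 ≤ PE y := fun y => Finset.sum_nonneg fun a _ => hp0 _
  -- RHS equals -KL(pE, pT) ≤ 0
  have hRHSkey : ∀ b, pE b * Real.log (pE b / pT b)
      = pE b * Real.log (pE b) - pE b * Real.log (pT b) := by
    intro b
    rcases eq_or_lt_of_le (hpE0 b) with h | h
    · rw [← h]; ring
    · rw [Real.log_div (ne_of_gt h) (ne_of_gt (habs b h))]; ring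
  have hRHS : ent pE - cross pE pT = -∑ b, pE b * Real.log (pE b / pT b) := by
    unfold ent cross
    rw [Finset.sum_congr rfl fun b _ => hRHSkey b, Finset.sum_sub_distrib]
    ring
  have hRHSle : ent pE - cross pE pT ≤ 0 := by
    rw [hRHS, neg_nonpos]
    exact gibbs pE pT hpE0 hpT0 (fun b h => habs b h) (by rw [hpTsum, hpEsum])
  -- LHS equals mutual information ≥ 0
  have hPTpos : ∀ x : α × α × β, 0 < p x → 0 < PT (x.1, x.2.2) := by
    intro x hx
    exact lt_of_lt_of_le hx (Finset.single_le_sum (fun b _ => hp0 (x.1, b, x.2.2))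
      (Finset.mem_univ x.2.1))
  have hPEpos : ∀ x : α × α × β, 0 < p x → 0 < PE (x.2.1, x.2.2) := by
    intro x hx
    exact lt_of_lt_of_le hx (Finset.single_le_sum (fun a _ => hp0 (a, x.2.1, x.2.2))
      (Finset.mem_univ x.1))
  have key : ∀ x : α × α × β,
      p x * Real.log (p x / (PT (x.1, x.2.2) * PE (x.2.1, x.2.2)))
      = p x * Real.log (p x) - p x * Real.log (PT (x.1, x.2.2))
        - p x * Real.log (PE (x.2.1, x.2.2)) := by
    intro x
    rcases eq_or_lt_of_le (hp0 x) with h | h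
    · rw [← h]; ring
    · rw [Real.log_div (ne_of_gt h) (ne_of_gt (mul_pos (hPTpos x h) (hPEpos x h))),
        Real.log_mul (ne_of_gt (hPTpos x h)) (ne_of_gt (hPEpos x h))]
      ring
  have hsumT : ∑ x : α × α × β, p x * Real.log (PT (x.1, x.2.2))
      = ∑ y : α × β, PT y * Real.log (PT y) := by
    have h1 : ∑ x : α × α × β, p x * Real.log (PT (x.1, x.2.2))
        = ∑ a, ∑ b, ∑ q, p (a, b, q) * Real.log (PT (a, q)) :=
      triple fun a b q => p (a, b, q) * Real.log (PT (a, q))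
    rw [h1, pairsum fun a q => PT (a, q) * Real.log (PT (a, q))]
    refine Finset.sum_congr rfl fun a _ => ?_
    rw [Finset.sum_comm]
    refine Finset.sum_congr rfl fun q _ => ?_
    rw [← Finset.sum_mul]
  have hsumE : ∑ x : α × α × β, p x * Real.log (PE (x.2.1, x.2.2))
      = ∑ y : α × β, PE y * Real.log (PE y) := by
    have h1 : ∑ x : α × α × β, p x * Real.log (PE (x.2.1, x.2.2))
        = ∑ a, ∑ b, ∑ q, p (a, b, q) * Real.log (PE (b, q)) :=
      triple fun a b q => p (a, b, q) * Real.log (PE (b, q))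
    rw [h1, pairsum fun b q => PE (b, q) * Real.log (PE (b, q)), Finset.sum_comm]
    refine Finset.sum_congr rfl fun b _ => ?_
    rw [Finset.sum_comm]
    refine Finset.sum_congr rfl fun q _ => ?_
    rw [← Finset.sum_mul]
  have hLHS : ent PT + ent PE - ent p
      = ∑ x : α × α × β, p x * Real.log (p x / (PT (x.1, x.2.2) * PE (x.2.1, x.2.2))) := by
    unfold ent
    rw [Finset.sum_congr rfl fun x _ => key x, Finset.sum_sub_distrib,
      Finset.sum_sub_distrib, hsumT, hsumE]
    ring
  -- the product of marginals sums to at most 1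
  have hQsum : ∀ q : β, ∑ a, PT (a, q) = ∑ b, PE (b, q) := by
    intro q
    simp only [hPT, hPE]
    exact Finset.sum_comm
  have hQ1 : ∑ q, ∑ a, PT (a, q) = 1 := by
    have : ∑ q, ∑ a, PT (a, q) = ∑ a, ∑ q, PT (a, q) := Finset.sum_comm
    rw [this]
    simp only [hPT]
    rw [← hp1']
    exact Finset.sum_congr rfl fun a _ => Finset.sum_comm
  have hQ0 : ∀ q, 0 ≤ ∑ a, PT (a, q) := fun q => Finset.sum_nonneg fun a _ => hPT0 _
  have hQle1 : ∀ q, ∑ a, PT (a, q) ≤ 1 := by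
    intro q
    rw [← hQ1]
    exact Finset.single_le_sum (fun q' _ => hQ0 q') (Finset.mem_univ q)
  have hqsumle : ∑ x : α × α × β, PT (x.1, x.2.2) * PE (x.2.1, x.2.2) ≤ ∑ x, p x := by
    rw [hp1]
    have h1 : ∑ x : α × α × β, PT (x.1, x.2.2) * PE (x.2.1, x.2.2)
        = ∑ a, ∑ b, ∑ q, PT (a, q) * PE (b, q) :=
      triple fun a b q => PT (a, q) * PE (b, q)
    rw [h1]
    have h2 : ∑ a, ∑ b, ∑ q, PT (a, q) * PE (b, q)
        = ∑ q, (∑ a, PT (a, q)) * (∑ a, PT (a, q)) := by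
      have : ∀ a, ∑ b, ∑ q, PT (a, q) * PE (b, q) = ∑ q, PT (a, q) * (∑ b, PE (b, q)) := by
        intro a
        rw [Finset.sum_comm]
        exact Finset.sum_congr rfl fun q _ => by rw [← Finset.mul_sum]
      rw [Finset.sum_congr rfl fun a _ => this a, Finset.sum_comm]
      refine Finset.sum_congr rfl fun q _ => ?_
      rw [← Finset.sum_mul, hQsum q]
    rw [h2, ← hQ1]
    exact Finset.sum_le_sum fun q _ => by nlinarith [hQ0 q, hQle1 q]
  have hLHSge : 0 ≤ ent PT + ent PE - ent p := by
    rw [hLHS]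
    exact gibbs p (fun x => PT (x.1, x.2.2) * PE (x.2.1, x.2.2)) hp0
      (fun x => mul_nonneg (hPT0 _) (hPE0 _))
      (fun x hx => mul_pos (hPTpos x hx) (hPEpos x hx)) hqsumle
  linarith
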